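/- Let G and H be finite groups. The functor −×_{(H,G)}−: ^H Fin_G × (^G Fin_H)^sep → Fin preserves pullbacks, finite coproducts, and epimorphisms separately in each variable. -/

import Mathlib

open CategoryTheory CategoryTheory.Limits MulOpposite

namespace Paper

/-- A functor preserves pullbacks, finite coproducts, and epimorphisms. -/
def PreservesPCE {C : Type*} {D : Type*} [Category C] [Category D] (F : C ⥤ D) : Prop :=
  Nonempty (PreservesLimitsOfShape WalkingCospan F) ∧
  (∀ (J : Type) [Finite J], Nonempty (PreservesColimitsOfShape (Discrete J) F)) ∧
  F.PreservesEpimorphisms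

/-- `Fun_pce C D`: the full subcategory of the functor category spanned by the functors
preserving pullbacks, finite coproducts and epimorphisms. -/
abbrev FunPCE (C : Type*) (D : Type*) [Category C] [Category D] :=
  ObjectProperty.FullSubcategory (fun F : C ⥤ D => PreservesPCE F)

/-- Finite sets with an action of the monoid `M`. -/
abbrev ActCat (M : Type) [Monoid M] := Action FintypeCat.{0} (MonCat.of M)

/-- `Fin_G`: finite right `G`-sets (encoded as left `Gᵐᵒᵖ`-actions). -/
abbrev FinRight (G : Type) [Group G] := ActCat Gᵐᵒᵖ

/-- `^G Fin`: the category of finite *free* left `G`-sets. -/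
abbrev FinFreeL (G : Type) [Group G] :=
  ObjectProperty.FullSubcategory (fun X : ActCat G => ∀ (g : G) (x : X.V), ConcreteCategory.hom (X.ρ g) x = x → g = 1)

/-- Finite `(G,H)`-bisets: a left `G`-action and a commuting right `H`-action. -/
abbrev BiAct (G H : Type) [Group G] [Group H] := ActCat (G × Hᵐᵒᵖ)

/-- The left `G`-action of a `(G,H)`-biset is free. -/
def LeftFree {G H : Type} [Group G] [Group H] (X : BiAct G H) : Prop :=
  ∀ (g : G) (x : X.V), ConcreteCategory.hom (X.ρ (g, 1)) x = x → g = 1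

/-- `^G Fin_H`: finite `(G,H)`-bisets whose left `G`-action is free. -/
abbrev BiFin (G H : Type) [Group G] [Group H] :=
  ObjectProperty.FullSubcategory (fun X : BiAct G H => LeftFree X)

/-- The separable `(G,H)`-biset `G × T` attached to a finite right `H`-set `T`,
with actions `g • (g', t) • h = (g * g', t • h)`. -/
noncomputable def sepBiset (G H : Type) [Group G] [Group H] [Fintype G]
    (T : ActCat Hᵐᵒᵖ) : BiAct G H where
  V := FintypeCat.of (G × T.V)
  ρ :=
    { toFun := fun m => FintypeCat.homMk (fun p : G × T.V =>
        (m.1 * p.1, ConcreteCategory.hom (T.ρ m.2) p.2))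
      map_one' := by
        apply FintypeCat.hom_ext
        intro p
        show ((1 : G) * p.1, ConcreteCategory.hom (T.ρ 1) p.2) = p
        rw [map_one]
        simp
      map_mul' := by
        intro a b
        apply FintypeCat.hom_ext
        intro p
        show ((a.1 * b.1) * p.1, ConcreteCategory.hom (T.ρ (a.2 * b.2)) p.2)
          = (a.1 * (b.1 * p.1), ConcreteCategory.hom (T.ρ a.2) (ConcreteCategory.hom (T.ρ b.2) p.2))
        rw [mul_assoc, map_mul]
        rfl }

/-- A `(G,H)`-biset is separable if it is isomorphic to `G × T`
for some finite right `H`-set `T`. -/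
def Separable (G H : Type) [Group G] [Group H] [Fintype G] (X : BiAct G H) : Prop :=
  ∃ T : ActCat Hᵐᵒᵖ, Nonempty (X ≅ sepBiset G H T)

/-- `(^G Fin_H)^sep`: the full subcategory of separable bisets. -/
abbrev SepCat (G H : Type) [Group G] [Group H] [Fintype G] :=
  ObjectProperty.FullSubcategory (fun X : BiFin G H => Separable G H X.obj)

variable {G H : Type} [Group G] [Group H]

/-- The relation generating `X ×_{(H,G)} Y`: `(x·g, y) ~ (x, g·y)` and `(h·x, y) ~ (x, y·h)`. -/
def pairRel (X : BiAct H G) (Y : BiAct G H) : X.V × Y.V → X.V × Y.V → Prop :=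
  fun p q =>
    (∃ g : G, p.1 = ConcreteCategory.hom (X.ρ (1, op g)) q.1 ∧ q.2 = ConcreteCategory.hom (Y.ρ (g, 1)) p.2) ∨
    (∃ h : H, q.1 = ConcreteCategory.hom (X.ρ (h, 1)) p.1 ∧ p.2 = ConcreteCategory.hom (Y.ρ (1, op h)) q.2)

/-- `X ×_{(H,G)} Y`: the quotient of `X × Y` by the equivalence relation generated by
`(x·g, y) ~ (x, g·y)` and `(h·x, y) ~ (x, y·h)`. -/
def PairSet (X : BiAct H G) (Y : BiAct G H) : Type := Quot (pairRel X Y)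

instance (X : BiAct H G) (Y : BiAct G H) : Finite (PairSet X Y) :=
  Quot.finite _

/-- `X ×_{(H,G)} Y` as an object of the category of finite sets. -/
noncomputable def pairObj (X : BiAct H G) (Y : BiAct G H) : FintypeCat :=
  letI := Fintype.ofFinite (PairSet X Y)
  FintypeCat.of (PairSet X Y)

/-- Functoriality of `X ×_{(H,G)} Y` in `X`. -/
noncomputable def pairMapFst {X X' : BiAct H G} (f : X ⟶ X') (Y : BiAct G H) :
    pairObj X Y ⟶ pairObj X' Y :=
  FintypeCat.homMk <| Quot.map (fun p : X.V × Y.V => (f.hom p.1, p.2)) (by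
    rintro ⟨x, y⟩ ⟨x', y'⟩ (⟨g, h1, h2⟩ | ⟨h, h1, h2⟩)
    · left
      refine ⟨g, ?_, h2⟩
      have := ConcreteCategory.congr_hom (f.comm (1, op g)) x'
      simp only [FintypeCat.comp_apply] at this
      dsimp only at h1 ⊢
      rw [h1]; exact this
    · right
      refine ⟨h, ?_, h2⟩
      have := ConcreteCategory.congr_hom (f.comm (h, 1)) x
      simp only [FintypeCat.comp_apply] at this
      dsimp only at h1 ⊢
      rw [h1]; exact this)

/-- Functoriality of `X ×_{(H,G)} Y` in `Y`. -/
noncomputable def pairMapSnd (X : BiAct H G) {Y Y' : BiAct G H} (f : Y ⟶ Y') :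
    pairObj X Y ⟶ pairObj X Y' :=
  FintypeCat.homMk <| Quot.map (fun p : X.V × Y.V => (p.1, f.hom p.2)) (by
    rintro ⟨x, y⟩ ⟨x', y'⟩ (⟨g, h1, h2⟩ | ⟨h, h1, h2⟩)
    · left
      refine ⟨g, h1, ?_⟩
      have := ConcreteCategory.congr_hom (f.comm (g, 1)) y
      simp only [FintypeCat.comp_apply] at this
      dsimp only at h2 ⊢
      rw [h2]; exact this
    · right
      refine ⟨h, h1, ?_⟩
      have := ConcreteCategory.congr_hom (f.comm (1, op h)) y'
      simp only [FintypeCat.comp_apply] at this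
      dsimp only at h2 ⊢
      rw [h2]; exact this)

/-- For a fixed biset `X`, the functor `X ×_{(H,G)} -` on all of `^G Fin_H`. -/
noncomputable def pairFstFunctorRaw (X : BiAct H G) : BiAct G H ⥤ FintypeCat where
  obj Y := pairObj X Y
  map f := pairMapSnd X f
  map_id Y := by
    apply FintypeCat.hom_ext
    intro q
    induction q using Quot.ind
    rfl
  map_comp f g := by
    apply FintypeCat.hom_ext
    intro q
    induction q using Quot.ind
    rfl

/-- For a fixed biset `X` in `^H Fin_G`, the functor `X ×_{(H,G)} -` on `(^G Fin_H)^sep`. -/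
noncomputable def pairFstFunctor (G H : Type) [Group G] [Group H] [Fintype G]
    (X : BiAct H G) : SepCat G H ⥤ FintypeCat :=
  ObjectProperty.ι _ ⋙ ObjectProperty.ι _ ⋙ pairFstFunctorRaw X

/-- For a fixed biset `Y` in `^G Fin_H`, the functor `- ×_{(H,G)} Y` on `^H Fin_G`. -/
noncomputable def pairSndFunctor (G H : Type) [Group G] [Group H]
    (Y : BiAct G H) : BiFin H G ⥤ FintypeCat where
  obj X := pairObj X.obj Y
  map f := pairMapFst f.hom Y
  map_id X := by
    apply FintypeCat.hom_ext
    intro q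
    induction q using Quot.ind
    rfl
  map_comp f g := by
    apply FintypeCat.hom_ext
    intro q
    induction q using Quot.ind
    rfl

variable (G H) [Fintype G] [Fintype H]

/-- The functor `(^G Fin_H)^sep ⟶ Fun_pce(^H Fin_G, Fin)` induced by the pairing. -/
noncomputable def pairingPhi
    (h : ∀ Y : SepCat G H, PreservesPCE (pairSndFunctor G H Y.obj.obj)) :
    SepCat G H ⥤ FunPCE (BiFin H G) FintypeCat where
  obj Y := ⟨pairSndFunctor G H Y.obj.obj, h Y⟩
  map {Y Y'} f := ObjectProperty.homMk
    { app := fun X => pairMapSnd X.obj f.hom.hom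
      naturality := by
        intro X X' g
        apply FintypeCat.hom_ext
        intro q
        induction q using Quot.ind
        rfl }
  map_id Y := by
    apply ObjectProperty.hom_ext
    apply NatTrans.ext
    funext X
    apply FintypeCat.hom_ext
    intro q
    induction q using Quot.ind
    rfl
  map_comp f g := by
    apply ObjectProperty.hom_ext
    apply NatTrans.ext
    funext X
    apply FintypeCat.hom_ext
    intro q
    induction q using Quot.ind
    rfl

/-- The functor `^H Fin_G ⟶ Fun_pce((^G Fin_H)^sep, Fin)` induced by the pairing. -/
noncomputable def pairingPsi
    (h : ∀ X : BiFin H G, PreservesPCE (pairFstFunctor G H X.obj)) :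
    BiFin H G ⥤ FunPCE (SepCat G H) FintypeCat where
  obj X := ⟨pairFstFunctor G H X.obj, h X⟩
  map {X X'} f := ObjectProperty.homMk
    { app := fun Y => pairMapFst f.hom Y.obj.obj
      naturality := by
        intro Y Y' g
        apply FintypeCat.hom_ext
        intro q
        induction q using Quot.ind
        rfl }
  map_id X := by
    apply ObjectProperty.hom_ext
    apply NatTrans.ext
    funext Y
    apply FintypeCat.hom_ext
    intro q
    induction q using Quot.ind
    rfl
  map_comp f g := by
    apply ObjectProperty.hom_ext
    apply NatTrans.ext
    funext Y
    apply FintypeCat.hom_ext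
    intro q
    induction q using Quot.ind
    rfl

end Paper

namespace Paper

/-!
`X ×_{(H,G)} Y` is the orbit set of `X × Y` under the action
`(h, g) • (x, y) = (h x g⁻¹, g y h⁻¹)` of `H × G`. A biset `Y` is separable exactly when it has
a coordinate `s : Y → G` with `s (g y h) = g * s y`, so if `X` is left free and `Y` separable
the action is free. Taking orbits always commutes with disjoint unions and preserves
surjections, and for free actions it also commutes with pullbacks. In both `^G Fin_H` and
`(^G Fin_H)^sep` pullbacks and finite coproducts are computed on underlying sets, since left
freeness and coordinates pass to them, and epimorphisms are surjective: `f : A → B` equalizes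
the two maps `B → B ⊔ B` that agree exactly on its image.
-/

section ActCat

variable {M : Type} [Monoid M]

lemma hom_smul {X Y : ActCat M} (f : X ⟶ Y) (m : M) (x : X.V) : f.hom (m • x) = m • f.hom x :=
  ConcreteCategory.congr_hom (f.comm m) x

lemma FintypeCat.isPullback_of_ext_of_exists {P A B C : FintypeCat.{0}} {fst : P ⟶ A}
    {snd : P ⟶ B} {f : A ⟶ C} {g : B ⟶ C} (w : fst ≫ f = snd ≫ g)
    (ext : ∀ x y, fst x = fst y → snd x = snd y → x = y)
    (exists_ : ∀ a b, f a = g b → ∃ x, fst x = a ∧ snd x = b) : IsPullback fst snd f g :=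
  IsPullback.of_map FintypeCat.incl w <| (Types.isPullback_iff _ _ _ _).2
    ⟨congr(FintypeCat.incl.map $w), fun x y h => ext x y h.1 h.2, exists_⟩

lemma ActCat.isPullback_of_ext_of_exists {P A B C : ActCat M} {fst : P ⟶ A}
    {snd : P ⟶ B} {f : A ⟶ C} {g : B ⟶ C} (w : fst ≫ f = snd ≫ g)
    (ext : ∀ x y, fst.hom x = fst.hom y → snd.hom x = snd.hom y → x = y)
    (exists_ : ∀ a b, f.hom a = g.hom b → ∃ x, fst.hom x = a ∧ snd.hom x = b) :
    IsPullback fst snd f g :=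
  IsPullback.of_map (Action.forget _ _) w <|
    FintypeCat.isPullback_of_ext_of_exists congr(Action.Hom.hom $w) ext exists_

lemma FintypeCat.isColimit_cofan_of_bijective {J : Type} {A : J → FintypeCat.{0}}
    {W : FintypeCat.{0}} (ι : ∀ j, A j ⟶ W)
    (h : Function.Bijective fun p : Σ j, A j => ι p.1 p.2) :
    Nonempty (IsColimit (Cofan.mk W ι)) :=
  ⟨isColimitOfReflects FintypeCat.incl <| (isColimitMapCoconeCofanMkEquiv _ _ _).symm <|
    Classical.choice <| (Cofan.nonempty_isColimit_iff_bijective_fromSigma _).2 h⟩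

lemma ActCat.isColimit_cofan_of_bijective {J : Type} {A : J → ActCat M}
    {W : ActCat M} (ι : ∀ j, A j ⟶ W)
    (h : Function.Bijective fun p : Σ j, (A j).V => (ι p.1).hom p.2) :
    Nonempty (IsColimit (Cofan.mk W ι)) :=
  ⟨isColimitOfReflects (Action.forget _ _) <| (isColimitMapCoconeCofanMkEquiv _ _ _).symm <|
    Classical.choice <| FintypeCat.isColimit_cofan_of_bijective _ h⟩

def pullbackSubMulAction {A B C : ActCat M} (f : A ⟶ C) (g : B ⟶ C) :
    SubMulAction M (A.V × B.V) where
  carrier := {p | f.hom p.1 = g.hom p.2}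
  smul_mem' m p (hp : f.hom p.1 = g.hom p.2) :=
    show f.hom (m • p.1) = g.hom (m • p.2) by rw [hom_smul, hom_smul, hp]

noncomputable def pullbackAct {A B C : ActCat M} (f : A ⟶ C) (g : B ⟶ C) : ActCat M :=
  letI := Fintype.ofFinite (pullbackSubMulAction f g)
  Action.FintypeCat.ofMulAction M (FintypeCat.of (pullbackSubMulAction f g))

noncomputable def pullbackFst {A B C : ActCat M} (f : A ⟶ C) (g : B ⟶ C) :
    pullbackAct f g ⟶ A where
  hom := FintypeCat.homMk fun p : pullbackSubMulAction f g => p.1.1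
  comm _ := rfl

noncomputable def pullbackSnd {A B C : ActCat M} (f : A ⟶ C) (g : B ⟶ C) :
    pullbackAct f g ⟶ B where
  hom := FintypeCat.homMk fun p : pullbackSubMulAction f g => p.1.2
  comm _ := rfl

lemma isPullback_pullbackAct {A B C : ActCat M} (f : A ⟶ C) (g : B ⟶ C) :
    IsPullback (pullbackFst f g) (pullbackSnd f g) f g :=
  ActCat.isPullback_of_ext_of_exists (Action.hom_ext _ _ (FintypeCat.hom_ext _ _ fun p => p.2))
    (fun _ _ h₁ h₂ => Subtype.ext (Prod.ext h₁ h₂))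
    fun a b h => ⟨⟨(a, b), h⟩, rfl, rfl⟩

noncomputable def sigmaAct {J : Type} [Finite J] (A : J → ActCat M) : ActCat M :=
  letI := Fintype.ofFinite (Σ j, (A j).V)
  Action.FintypeCat.ofMulAction M (FintypeCat.of (Σ j, (A j).V))

noncomputable def sigmaInj {J : Type} [Finite J] (A : J → ActCat M) (j : J) :
    A j ⟶ sigmaAct A where
  hom := FintypeCat.homMk fun a => (⟨j, a⟩ : Σ j, (A j).V)
  comm _ := rfl

lemma isColimit_sigmaAct {J : Type} [Finite J] (A : J → ActCat M) :
    Nonempty (IsColimit (Cofan.mk (sigmaAct A) (sigmaInj A))) :=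
  ActCat.isColimit_cofan_of_bijective _ Function.bijective_id

end ActCat

section Epi

variable {M : Type} [Group M] {A B : ActCat M}

lemma smul_mem_range_iff (f : A ⟶ B) (m : M) (b : B.V) :
    m • b ∈ Set.range f.hom ↔ b ∈ Set.range f.hom := by
  constructor
  · rintro ⟨a, ha⟩
    exact ⟨m⁻¹ • a, by rw [hom_smul, ha, inv_smul_smul]⟩
  · rintro ⟨a, rfl⟩
    exact ⟨m • a, hom_smul f m a⟩

open Classical in
noncomputable def rangeIndicator (f : A ⟶ B) : B ⟶ sigmaAct fun _ : Bool => B where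
  hom := FintypeCat.homMk fun b => (⟨decide (b ∈ Set.range f.hom), b⟩ : Σ _ : Bool, B.V)
  comm m := FintypeCat.hom_ext _ _ fun b => by
    change (⟨decide (m • b ∈ Set.range f.hom), m • b⟩ : Σ _ : Bool, B.V) =
      ⟨decide (b ∈ Set.range f.hom), m • b⟩
    rw [smul_mem_range_iff]

open Classical in
lemma surjective_of_cancel (f : A ⟶ B)
    (hf : ∀ u v : B ⟶ sigmaAct fun _ : Bool => B, f ≫ u = f ≫ v → u = v) :
    Function.Surjective f.hom := by
  have h : rangeIndicator f = sigmaInj (fun _ : Bool => B) true :=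
    hf _ _ <| Action.hom_ext _ _ <| FintypeCat.hom_ext _ _ fun a => by
      change (⟨decide (f.hom a ∈ Set.range f.hom), f.hom a⟩ : Σ _ : Bool, B.V) =
        ⟨true, f.hom a⟩
      simp
  intro b
  have hb : (⟨decide (b ∈ Set.range f.hom), b⟩ : Σ _ : Bool, B.V) = ⟨true, b⟩ :=
    congr($(congr(Action.Hom.hom $h)) b)
  simpa using congr($hb.1)

end Epi

section Separable

variable {G H : Type} [Group G] [Group H]

noncomputable def coordFiber (X : BiAct G H) (s : X.V → G)
    (hs : ∀ (m : G × Hᵐᵒᵖ) x, s (m • x) = m.1 * s x) : ActCat Hᵐᵒᵖ :=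
  letI : MulAction Hᵐᵒᵖ {x : X.V // s x = 1} :=
    { smul h x := ⟨((1 : G), h) • x.1, by rw [hs, x.2, one_mul]⟩
      one_smul x := Subtype.ext (one_smul (G × Hᵐᵒᵖ) x.1)
      mul_smul a b x := Subtype.ext <| by
        change ((1 : G), a * b) • x.1 = ((1 : G), a) • ((1 : G), b) • x.1
        rw [smul_smul, Prod.mk_mul_mk, one_mul] }
  letI := Fintype.ofFinite {x : X.V // s x = 1}
  Action.FintypeCat.ofMulAction Hᵐᵒᵖ (FintypeCat.of {x : X.V // s x = 1})

lemma separable_iff_exists_coord [Fintype G] {X : BiAct G H} :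
    Separable G H X ↔
      ∃ s : X.V → G, ∀ (m : G × Hᵐᵒᵖ) x, s (m • x) = m.1 * s x := by
  constructor
  · rintro ⟨T, ⟨e⟩⟩
    exact ⟨fun x => (e.hom.hom x).1, fun m x => congrArg Prod.fst (hom_smul e.hom m x)⟩
  · rintro ⟨s, hs⟩
    refine ⟨coordFiber X s hs, ⟨Action.mkIso (FintypeCat.equivEquivIso ?_) fun m => ?_⟩⟩
    · exact
        { toFun x := (s x, ⟨((s x)⁻¹, (1 : Hᵐᵒᵖ)) • x, by rw [hs, inv_mul_cancel]⟩)
          invFun p := (p.1, (1 : Hᵐᵒᵖ)) • p.2.1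
          left_inv x := by simp [smul_smul, ← Prod.one_eq_mk]
          right_inv p := by
            obtain ⟨g, ⟨x, hx⟩⟩ := p
            refine Prod.ext (by simp [hs, hx]) (Subtype.ext ?_)
            simp [hs, hx, smul_smul, ← Prod.one_eq_mk] }
    · refine FintypeCat.hom_ext _ _ fun x => Prod.ext (hs m x) (Subtype.ext ?_)
      change ((s (m • x))⁻¹, (1 : Hᵐᵒᵖ)) • m • x =
        ((1 : G), m.2) • ((s x)⁻¹, (1 : Hᵐᵒᵖ)) • x
      simp [hs, smul_smul, Prod.mul_def]

end Separable

section Closure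

variable {G H : Type} [Group G] [Group H]

lemma leftFree_pullbackAct {A B C : BiAct G H} (f : A ⟶ C) (g : B ⟶ C) (hA : LeftFree A) :
    LeftFree (pullbackAct f g) :=
  fun g₀ p hp => hA g₀ p.1.1 congr($hp.1.1)

lemma leftFree_sigmaAct {J : Type} [Finite J] {A : J → BiAct G H} (hA : ∀ j, LeftFree (A j)) :
    LeftFree (sigmaAct A) :=
  fun g₀ p hp => hA p.1 g₀ p.2 (eq_of_heq (Sigma.ext_iff.1 hp).2)

variable [Fintype G]

lemma separable_pullbackAct {A B C : BiAct G H} (f : A ⟶ C) (g : B ⟶ C)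
    (hA : Separable G H A) : Separable G H (pullbackAct f g) :=
  let ⟨s, hs⟩ := separable_iff_exists_coord.1 hA
  separable_iff_exists_coord.2
    ⟨fun p : pullbackSubMulAction f g => s p.1.1, fun m p => hs m p.1.1⟩

lemma separable_sigmaAct {J : Type} [Finite J] {A : J → BiAct G H}
    (hA : ∀ j, Separable G H (A j)) : Separable G H (sigmaAct A) := by
  choose s hs using fun j => separable_iff_exists_coord.1 (hA j)
  exact separable_iff_exists_coord.2
    ⟨fun p : Σ j, (A j).V => s p.1 p.2, fun m p => hs p.1 m p.2⟩

end Closure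

namespace BiFin

variable {G H : Type} [Group G] [Group H]

noncomputable def pullback {A B C : BiFin G H} (f : A ⟶ C) (g : B ⟶ C) : BiFin G H :=
  ⟨pullbackAct f.hom g.hom, leftFree_pullbackAct f.hom g.hom A.property⟩

noncomputable def pullbackFst {A B C : BiFin G H} (f : A ⟶ C) (g : B ⟶ C) :
    pullback f g ⟶ A :=
  ObjectProperty.homMk (Paper.pullbackFst f.hom g.hom)

noncomputable def pullbackSnd {A B C : BiFin G H} (f : A ⟶ C) (g : B ⟶ C) :
    pullback f g ⟶ B :=
  ObjectProperty.homMk (Paper.pullbackSnd f.hom g.hom)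

lemma isPullback_pullback {A B C : BiFin G H} (f : A ⟶ C) (g : B ⟶ C) :
    IsPullback (pullbackFst f g) (pullbackSnd f g) f g :=
  IsPullback.of_map (ObjectProperty.ι _)
    (ObjectProperty.hom_ext _ (isPullback_pullbackAct f.hom g.hom).w)
    (isPullback_pullbackAct f.hom g.hom)

noncomputable def sigma {J : Type} [Finite J] (A : J → BiFin G H) : BiFin G H :=
  ⟨sigmaAct fun j => (A j).obj, leftFree_sigmaAct fun j => (A j).property⟩

noncomputable def sigmaInj {J : Type} [Finite J] (A : J → BiFin G H) (j : J) : A j ⟶ sigma A :=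
  ObjectProperty.homMk (Paper.sigmaInj (fun j => (A j).obj) j)

lemma isColimit_sigma {J : Type} [Finite J] (A : J → BiFin G H) :
    Nonempty (IsColimit (Cofan.mk (sigma A) (sigmaInj A))) :=
  ⟨isColimitOfReflects (ObjectProperty.ι _) <|
    (isColimitMapCoconeCofanMkEquiv _ _ _).symm (isColimit_sigmaAct _).some⟩

lemma surjective_of_epi {A B : BiFin G H} (f : A ⟶ B) [Epi f] : Function.Surjective f.hom.hom :=
  surjective_of_cancel f.hom fun u v h => by
    let D : BiFin G H := ⟨sigmaAct fun _ : Bool => B.obj, leftFree_sigmaAct fun _ => B.property⟩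
    have := (cancel_epi f).1 (ObjectProperty.hom_ext _ h :
      f ≫ (ObjectProperty.homMk u : B ⟶ D) = f ≫ ObjectProperty.homMk v)
    exact congrArg (fun φ => φ.hom) this

end BiFin

namespace SepCat

variable {G H : Type} [Group G] [Group H] [Fintype G]

noncomputable def pullback {A B C : SepCat G H} (f : A ⟶ C) (g : B ⟶ C) : SepCat G H :=
  ⟨BiFin.pullback f.hom g.hom, separable_pullbackAct f.hom.hom g.hom.hom A.property⟩

noncomputable def pullbackFst {A B C : SepCat G H} (f : A ⟶ C) (g : B ⟶ C) :
    pullback f g ⟶ A :=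
  ObjectProperty.homMk (BiFin.pullbackFst f.hom g.hom)

noncomputable def pullbackSnd {A B C : SepCat G H} (f : A ⟶ C) (g : B ⟶ C) :
    pullback f g ⟶ B :=
  ObjectProperty.homMk (BiFin.pullbackSnd f.hom g.hom)

lemma isPullback_pullback {A B C : SepCat G H} (f : A ⟶ C) (g : B ⟶ C) :
    IsPullback (pullbackFst f g) (pullbackSnd f g) f g :=
  IsPullback.of_map (ObjectProperty.ι _)
    (ObjectProperty.hom_ext _ (BiFin.isPullback_pullback f.hom g.hom).w)
    (BiFin.isPullback_pullback f.hom g.hom)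

noncomputable def sigma {J : Type} [Finite J] (A : J → SepCat G H) : SepCat G H :=
  ⟨BiFin.sigma fun j => (A j).obj, separable_sigmaAct fun j => (A j).property⟩

noncomputable def sigmaInj {J : Type} [Finite J] (A : J → SepCat G H) (j : J) : A j ⟶ sigma A :=
  ObjectProperty.homMk (BiFin.sigmaInj (fun j => (A j).obj) j)

lemma isColimit_sigma {J : Type} [Finite J] (A : J → SepCat G H) :
    Nonempty (IsColimit (Cofan.mk (sigma A) (sigmaInj A))) :=
  ⟨isColimitOfReflects (ObjectProperty.ι _) <|
    (isColimitMapCoconeCofanMkEquiv _ _ _).symm (BiFin.isColimit_sigma _).some⟩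

lemma surjective_of_epi {A B : SepCat G H} (f : A ⟶ B) [Epi f] :
    Function.Surjective f.hom.hom.hom :=
  surjective_of_cancel f.hom.hom fun u v h => by
    let D : SepCat G H := ⟨⟨sigmaAct fun _ : Bool => B.obj.obj,
      leftFree_sigmaAct fun _ => B.obj.property⟩, separable_sigmaAct fun _ => B.property⟩
    have := (cancel_epi f).1 (ObjectProperty.hom_ext _ (ObjectProperty.hom_ext _ h) :
      f ≫ (ObjectProperty.homMk (ObjectProperty.homMk u) : B ⟶ D) =
        f ≫ ObjectProperty.homMk (ObjectProperty.homMk v))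
    exact congrArg (fun φ => φ.hom.hom) this

end SepCat

section Preservation

variable {C D : Type*} [Category C] [Category D] (F : C ⥤ D)

lemma preservesLimitsOfShape_walkingCospan_of_isPullback
    (hF : ∀ {X Y Z : C} (f : X ⟶ Z) (g : Y ⟶ Z), ∃ (P : C) (fst : P ⟶ X) (snd : P ⟶ Y),
      IsPullback fst snd f g ∧ IsPullback (F.map fst) (F.map snd) (F.map f) (F.map g)) :
    PreservesLimitsOfShape WalkingCospan F where
  preservesLimit {K} := by
    obtain ⟨P, fst, snd, h, hF⟩ :=
      hF (K.map WalkingCospan.Hom.inl) (K.map WalkingCospan.Hom.inr)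
    have := preservesLimit_of_preserves_limit_cone h.isLimit
      ((isLimitMapConePullbackConeEquiv F h.w).symm hF.isLimit)
    exact preservesLimit_of_iso_diagram F (diagramIsoCospan K).symm

lemma preservesColimitsOfShape_discrete_of_isColimit {J : Type*}
    (hF : ∀ A : J → C, ∃ (S : C) (ι : ∀ j, A j ⟶ S),
      Nonempty (IsColimit (Cofan.mk S ι)) ∧
      Nonempty (IsColimit (Cofan.mk (F.obj S) fun j => F.map (ι j)))) :
    PreservesColimitsOfShape (Discrete J) F where
  preservesColimit {K} := by
    obtain ⟨S, ι, ⟨h⟩, ⟨hF⟩⟩ := hF (K.obj ∘ Discrete.mk)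
    have := preservesColimit_of_preserves_colimit_cocone h
      ((isColimitMapCoconeCofanMkEquiv F _ _).symm hF)
    exact preservesColimit_of_iso_diagram F (Discrete.natIsoFunctor (F := K)).symm

end Preservation

section Pairing

variable {G H : Type} [Group G] [Group H]

instance (X : BiAct H G) (Y : BiAct G H) : MulAction (H × G) (X.V × Y.V) where
  smul k p := ((k.1, op k.2⁻¹) • p.1, (k.2, op k.1⁻¹) • p.2)
  one_smul p := by
    change (((1 : H), op (1 : G)⁻¹) • p.1, ((1 : G), op (1 : H)⁻¹) • p.2) = p
    simp [← Prod.one_eq_mk]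
  mul_smul k k' p := by
    change (((k * k').1, op (k * k').2⁻¹) • p.1, ((k * k').2, op (k * k').1⁻¹) • p.2) =
      ((k.1, op k.2⁻¹) • (k'.1, op k'.2⁻¹) • p.1,
        (k.2, op k.1⁻¹) • (k'.2, op k'.1⁻¹) • p.2)
    simp [smul_smul]

lemma pair_smul_def {X : BiAct H G} {Y : BiAct G H} (k : H × G) (p : X.V × Y.V) :
    k • p = ((k.1, op k.2⁻¹) • p.1, (k.2, op k.1⁻¹) • p.2) := rfl

lemma pairRel_iff {X : BiAct H G} {Y : BiAct G H} {p q : X.V × Y.V} :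
    pairRel X Y p q ↔
      (∃ g : G, p.1 = ((1 : H), op g) • q.1 ∧ q.2 = (g, (1 : Hᵐᵒᵖ)) • p.2) ∨
      (∃ h : H, q.1 = (h, (1 : Gᵐᵒᵖ)) • p.1 ∧ p.2 = ((1 : G), op h) • q.2) :=
  Iff.rfl

lemma pairRel_mk_eq_mk_iff {X : BiAct H G} {Y : BiAct G H} {p q : X.V × Y.V} :
    Quot.mk (pairRel X Y) p = Quot.mk (pairRel X Y) q ↔ ∃ k : H × G, k • p = q := by
  rw [Quot.eq]
  constructor
  · intro hpq
    induction hpq with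
    | rel p q hpq =>
      rcases pairRel_iff.1 hpq with ⟨g, hp, hq⟩ | ⟨h, hq, hp⟩
      · exact ⟨(1, g), Prod.ext (by simp [pair_smul_def, hp, smul_smul, ← Prod.one_eq_mk])
          (by simp [pair_smul_def, hq])⟩
      · exact ⟨(h, 1), Prod.ext (by simp [pair_smul_def, hq])
          (by simp [pair_smul_def, hp, smul_smul, ← Prod.one_eq_mk])⟩
    | refl p => exact ⟨1, one_smul _ _⟩
    | symm p q _ ih =>
      obtain ⟨k, rfl⟩ := ih
      exact ⟨k⁻¹, inv_smul_smul k p⟩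
    | trans p q r _ _ ih ih' =>
      obtain ⟨k, rfl⟩ := ih
      obtain ⟨k', rfl⟩ := ih'
      exact ⟨k' * k, mul_smul k' k p⟩
  · rintro ⟨⟨h, g⟩, rfl⟩
    have left : pairRel X Y p ((h, (1 : G)) • p) :=
      pairRel_iff.2 <| .inr
        ⟨h, by simp [pair_smul_def], by simp [pair_smul_def, smul_smul, ← Prod.one_eq_mk]⟩
    have right : pairRel X Y ((h, (1 : G)) • p) ((h, g) • p) :=
      pairRel_iff.2 <| .inl
        ⟨g, by simp [pair_smul_def, smul_smul], by simp [pair_smul_def, smul_smul]⟩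
    exact .trans _ _ _ (.rel _ _ left) (.rel _ _ right)

variable [Fintype G]

lemma eq_one_of_smul_eq_self {X : BiAct H G} {Y : BiAct G H} (hX : LeftFree X)
    (hY : Separable G H Y) {k : H × G} {p : X.V × Y.V} (hk : k • p = p) : k = 1 := by
  obtain ⟨s, hs⟩ := separable_iff_exists_coord.1 hY
  have h₂ : k.2 = 1 := by
    simpa [pair_smul_def, hs] using congr(s $hk.2)
  have h₁ : k.1 = 1 := hX k.1 p.1 <| show (k.1, (1 : Gᵐᵒᵖ)) • p.1 = p.1 by
    simpa [pair_smul_def, h₂] using congr($hk.1)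
  exact Prod.ext h₁ h₂

lemma eq_of_smul_eq_smul {X : BiAct H G} {Y : BiAct G H} (hX : LeftFree X)
    (hY : Separable G H Y) {k k' : H × G} {p : X.V × Y.V} (h : k • p = k' • p) : k = k' := by
  have : (k'⁻¹ * k) • p = p := by rw [mul_smul, h, inv_smul_smul]
  exact (inv_mul_eq_one.1 (eq_one_of_smul_eq_self hX hY this)).symm

end Pairing

section Comparison

variable {G H : Type} [Group G] [Group H]

lemma smul_map_id_hom {X : BiAct H G} {Y Y' : BiAct G H} (f : Y ⟶ Y') (k : H × G)
    (p : X.V × Y.V) : k • Prod.map id f.hom p = Prod.map id f.hom (k • p) :=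
  Prod.ext rfl (hom_smul f _ _).symm

lemma smul_map_hom_id {X X' : BiAct H G} {Y : BiAct G H} (f : X ⟶ X') (k : H × G)
    (p : X.V × Y.V) : k • Prod.map f.hom id p = Prod.map f.hom id (k • p) :=
  Prod.ext (hom_smul f _ _).symm rfl

lemma isPullback_pairMapSnd [Fintype G] {X : BiAct H G} (hX : LeftFree X)
    {A B C : BiAct G H} (hC : Separable G H C) (f : A ⟶ C) (g : B ⟶ C) :
    IsPullback (pairMapSnd X (pullbackFst f g)) (pairMapSnd X (pullbackSnd f g))
      (pairMapSnd X f) (pairMapSnd X g) := by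
  refine FintypeCat.isPullback_of_ext_of_exists ?_ ?_ ?_
  · refine FintypeCat.hom_ext _ _ fun w => ?_
    induction w using Quot.ind with
    | mk p => exact congrArg (fun c => Quot.mk _ (p.1, c)) p.2.2
  · intro w w'
    induction w using Quot.ind with | mk p => ?_
    induction w' using Quot.ind with | mk p' => ?_
    intro h₁ h₂
    obtain ⟨k, hk⟩ := pairRel_mk_eq_mk_iff.1 h₁
    obtain ⟨k', hk'⟩ := pairRel_mk_eq_mk_iff.1 h₂
    have e : k • (p.1, f.hom p.2.1.1) = (p'.1, f.hom p'.2.1.1) :=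
      (smul_map_id_hom f k _).trans congr(Prod.map id f.hom $hk)
    have e' : k' • (p.1, g.hom p.2.1.2) = (p'.1, g.hom p'.2.1.2) :=
      (smul_map_id_hom g k' _).trans congr(Prod.map id g.hom $hk')
    rw [← p.2.2, ← p'.2.2, ← e] at e'
    obtain rfl : k = k' := eq_of_smul_eq_smul hX hC e'.symm
    exact pairRel_mk_eq_mk_iff.2
      ⟨k, Prod.ext congr($hk.1) (Subtype.ext (Prod.ext congr($hk.2) congr($hk'.2)))⟩
  · intro a b
    induction a using Quot.ind with | mk a => ?_
    induction b using Quot.ind with | mk b => ?_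
    intro h
    obtain ⟨k, hk : k • Prod.map id f.hom a = Prod.map id g.hom b⟩ := pairRel_mk_eq_mk_iff.1 h
    have hq : Prod.map id g.hom (k⁻¹ • b) = Prod.map id f.hom a := by
      rw [← smul_map_id_hom, ← hk, inv_smul_smul]
    refine ⟨Quot.mk _ (a.1, ⟨(a.2, (k⁻¹ • b).2), congr($hq.2).symm⟩), rfl,
      pairRel_mk_eq_mk_iff.2 ⟨k, ?_⟩⟩
    have h₁ : (k⁻¹ • b).1 = a.1 := congr($hq.1)
    change k • ((a.1, (k⁻¹ • b).2) : X.V × B.V) = b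
    rw [← h₁, Prod.mk.eta, smul_inv_smul]

lemma isPullback_pairMapFst [Fintype G] {Y : BiAct G H} (hY : Separable G H Y)
    {A B C : BiAct H G} (hC : LeftFree C) (f : A ⟶ C) (g : B ⟶ C) :
    IsPullback (pairMapFst (pullbackFst f g) Y) (pairMapFst (pullbackSnd f g) Y)
      (pairMapFst f Y) (pairMapFst g Y) := by
  refine FintypeCat.isPullback_of_ext_of_exists ?_ ?_ ?_
  · refine FintypeCat.hom_ext _ _ fun w => ?_
    induction w using Quot.ind with
    | mk p => exact congrArg (fun c => Quot.mk _ (c, p.2)) p.1.2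
  · intro w w'
    induction w using Quot.ind with | mk p => ?_
    induction w' using Quot.ind with | mk p' => ?_
    intro h₁ h₂
    obtain ⟨k, hk⟩ := pairRel_mk_eq_mk_iff.1 h₁
    obtain ⟨k', hk'⟩ := pairRel_mk_eq_mk_iff.1 h₂
    have e : k • (f.hom p.1.1.1, p.2) = (f.hom p'.1.1.1, p'.2) :=
      (smul_map_hom_id f k _).trans congr(Prod.map f.hom id $hk)
    have e' : k' • (g.hom p.1.1.2, p.2) = (g.hom p'.1.1.2, p'.2) :=
      (smul_map_hom_id g k' _).trans congr(Prod.map g.hom id $hk')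
    rw [← p.1.2, ← p'.1.2, ← e] at e'
    obtain rfl : k = k' := eq_of_smul_eq_smul hC hY e'.symm
    exact pairRel_mk_eq_mk_iff.2
      ⟨k, Prod.ext (Subtype.ext (Prod.ext congr($hk.1) congr($hk'.1))) congr($hk.2)⟩
  · intro a b
    induction a using Quot.ind with | mk a => ?_
    induction b using Quot.ind with | mk b => ?_
    intro h
    obtain ⟨k, hk : k • Prod.map f.hom id a = Prod.map g.hom id b⟩ := pairRel_mk_eq_mk_iff.1 h
    have hq : Prod.map g.hom id (k⁻¹ • b) = Prod.map f.hom id a := by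
      rw [← smul_map_hom_id, ← hk, inv_smul_smul]
    refine ⟨Quot.mk _ (⟨(a.1, (k⁻¹ • b).1), congr($hq.1).symm⟩, a.2), rfl,
      pairRel_mk_eq_mk_iff.2 ⟨k, ?_⟩⟩
    have h₂ : (k⁻¹ • b).2 = a.2 := congr($hq.2)
    change k • (((k⁻¹ • b).1, a.2) : B.V × Y.V) = b
    rw [← h₂, Prod.mk.eta, smul_inv_smul]

lemma isColimit_pairMapSnd_sigma (X : BiAct H G) {J : Type} [Finite J] (A : J → BiAct G H) :
    Nonempty (IsColimit
      (Cofan.mk (pairObj X (sigmaAct A)) fun j => pairMapSnd X (sigmaInj A j))) := by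
  refine FintypeCat.isColimit_cofan_of_bijective _ ⟨?_, ?_⟩
  · rintro ⟨j, w⟩ ⟨j', w'⟩ h
    induction w using Quot.ind with | mk p => ?_
    induction w' using Quot.ind with | mk p' => ?_
    obtain ⟨k, hk⟩ := pairRel_mk_eq_mk_iff.1 h
    obtain ⟨rfl, h₂⟩ := Sigma.mk.inj_iff.1 congr($hk.2)
    exact Sigma.ext rfl <| heq_of_eq <|
      pairRel_mk_eq_mk_iff.2 ⟨k, Prod.ext congr($hk.1) (eq_of_heq h₂)⟩
  · intro w
    induction w using Quot.ind with
    | mk p => exact ⟨⟨p.2.1, Quot.mk _ (p.1, p.2.2)⟩, rfl⟩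

lemma isColimit_pairMapFst_sigma {J : Type} [Finite J] (A : J → BiAct H G) (Y : BiAct G H) :
    Nonempty (IsColimit
      (Cofan.mk (pairObj (sigmaAct A) Y) fun j => pairMapFst (sigmaInj A j) Y)) := by
  refine FintypeCat.isColimit_cofan_of_bijective _ ⟨?_, ?_⟩
  · rintro ⟨j, w⟩ ⟨j', w'⟩ h
    induction w using Quot.ind with | mk p => ?_
    induction w' using Quot.ind with | mk p' => ?_
    obtain ⟨k, hk⟩ := pairRel_mk_eq_mk_iff.1 h
    obtain ⟨rfl, h₁⟩ := Sigma.mk.inj_iff.1 congr($hk.1)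
    exact Sigma.ext rfl <| heq_of_eq <|
      pairRel_mk_eq_mk_iff.2 ⟨k, Prod.ext (eq_of_heq h₁) congr($hk.2)⟩
  · intro w
    induction w using Quot.ind with
    | mk p => exact ⟨⟨p.1.1, Quot.mk _ (p.1.2, p.2)⟩, rfl⟩

lemma surjective_pairMapSnd (X : BiAct H G) {Y Y' : BiAct G H} {f : Y ⟶ Y'}
    (hf : Function.Surjective f.hom) : Function.Surjective (pairMapSnd X f) := by
  intro w
  induction w using Quot.ind with
  | mk p =>
    obtain ⟨y, hy⟩ := hf p.2
    exact ⟨Quot.mk _ (p.1, y), congrArg (fun y => Quot.mk _ (p.1, y)) hy⟩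

lemma surjective_pairMapFst {X X' : BiAct H G} {f : X ⟶ X'} (Y : BiAct G H)
    (hf : Function.Surjective f.hom) : Function.Surjective (pairMapFst f Y) := by
  intro w
  induction w using Quot.ind with
  | mk p =>
    obtain ⟨x, hx⟩ := hf p.1
    exact ⟨Quot.mk _ (x, p.2), congrArg (fun x => Quot.mk _ (x, p.2)) hx⟩

end Comparison

section Main

variable {G H : Type} [Group G] [Group H] [Fintype G]

lemma preservesPCE_pairFstFunctor (X : BiFin H G) : PreservesPCE (pairFstFunctor G H X.obj) := by
  refine ⟨⟨?_⟩, fun J _ => ⟨?_⟩, ⟨fun f _ => ?_⟩⟩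
  · exact preservesLimitsOfShape_walkingCospan_of_isPullback _ fun {_ _ C} f g =>
      ⟨_, _, _, SepCat.isPullback_pullback f g,
        isPullback_pairMapSnd X.property C.property f.hom.hom g.hom.hom⟩
  · exact preservesColimitsOfShape_discrete_of_isColimit _ fun A =>
      ⟨_, _, SepCat.isColimit_sigma A, isColimit_pairMapSnd_sigma X.obj _⟩
  · exact ConcreteCategory.epi_of_surjective _
      (surjective_pairMapSnd X.obj (SepCat.surjective_of_epi f))

lemma preservesPCE_pairSndFunctor (Y : SepCat G H) :
    PreservesPCE (pairSndFunctor G H Y.obj.obj) := by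
  refine ⟨⟨?_⟩, fun J _ => ⟨?_⟩, ⟨fun f _ => ?_⟩⟩
  · exact preservesLimitsOfShape_walkingCospan_of_isPullback _ fun {_ _ C} f g =>
      ⟨_, _, _, BiFin.isPullback_pullback f g,
        isPullback_pairMapFst Y.property C.property f.hom g.hom⟩
  · exact preservesColimitsOfShape_discrete_of_isColimit _ fun A =>
      ⟨_, _, BiFin.isColimit_sigma A, isColimit_pairMapFst_sigma _ Y.obj.obj⟩
  · exact ConcreteCategory.epi_of_surjective _
      (surjective_pairMapFst Y.obj.obj (BiFin.surjective_of_epi f))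

end Main

theorem pairing_preserves_pce_general (G H : Type) [Group G] [Group H] [Fintype G] :
    (∀ X : BiFin H G, PreservesPCE (pairFstFunctor G H X.obj)) ∧
    (∀ Y : SepCat G H, PreservesPCE (pairSndFunctor G H Y.obj.obj)) :=
  ⟨preservesPCE_pairFstFunctor, preservesPCE_pairSndFunctor⟩

/-- **Statement 6**. For finite groups `G` and `H`, the functor
`- ×_{(H,G)} - : ^H Fin_G × (^G Fin_H)^sep → Fin` preserves pullbacks, finite coproducts
and epimorphisms separately in each variable. -/
theorem pairing_preserves_pce (G H : Type) [Group G] [Group H] [Fintype G] [Fintype H] :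
    (∀ X : BiFin H G, PreservesPCE (pairFstFunctor G H X.obj)) ∧
    (∀ Y : SepCat G H, PreservesPCE (pairSndFunctor G H Y.obj.obj)) :=
  pairing_preserves_pce_general G H

end Paper
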